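/- Let θ₁,θ₂>0 with θ:=θ₁+θ₂≤1, let u∈L¹_loc(Ω), and assume θ=1, or [θ<1 and ‖u‖_∞≤1]. Let (r_k),(ε_k) be sequences with 0<r_k≤ε_k→0. For 1≤i≤n₁, 1≤j≤n₂, define F_{ij}(u) := liminf_{k→∞} ∫_{Ω^{ε_k}} q(x,(r_k e_i, r_k f_j)) / r_k² dx, with q(x,z) := (|u(x+z₂+z₁)−u(x+z₂)|^{θ₁}+|u(x+z₁)−u(x)|^{θ₁})·(|u(x+z₁+z₂)−u(x+z₁)|^{θ₂}+|u(x+z₂)−u(x)|^{θ₂}). Then there is a constant C depending only on θ₁,θ₂ such that liminf_{k→∞} ∫_{Ω^{ε_k}} |u(x+r_k e_i+r_k f_j)−u(x+r_k e_i)−u(x+r_k f_j)+u(x)| / r_k² dx ≤ C·F_{ij}(u). -/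
import Mathlib


open MeasureTheory Filter Set
open scoped ENNReal Topology NNReal

noncomputable section

abbrev Euc (n : ℕ) : Type := EuclideanSpace ℝ (Fin n)

/-- Euclidean norm of a point of `ℝ^{n₁} × ℝ^{n₂}`. -/
def prodNorm {n₁ n₂ : ℕ} (z : Euc n₁ × Euc n₂) : ℝ :=
  Real.sqrt (‖z.1‖ ^ 2 + ‖z.2‖ ^ 2)

/-- A radial nonnegative kernel of mass one supported in the unit ball. -/
structure IsKernel {n₁ n₂ : ℕ} (ρ : Euc n₁ × Euc n₂ → ℝ) : Prop where
  integrable : Integrable ρ volume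
  nonneg : ∀ z, 0 ≤ ρ z
  total : (∫ z, ρ z) = 1
  radial : ∀ z w, prodNorm z = prodNorm w → ρ z = ρ w
  support : ∀ z, 1 ≤ prodNorm z → ρ z = 0

/-- A nonempty bounded open connected set. -/
structure GoodDomain {m : ℕ} (Ω : Set (Euc m)) : Prop where
  nonempty : Ω.Nonempty
  isOpen : IsOpen Ω
  connected : IsConnected Ω
  bounded : Bornology.IsBounded Ω

/-- `Ω^ε := ⋂_{|z|<ε} (Ω - z)`. -/
def tube {m : ℕ} (Ω : Set (Euc m)) (ε : ℝ) : Set (Euc m) :=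
  {x | ∀ z : Euc m, ‖z‖ < ε → x + z ∈ Ω}

/-- The localized energy `E_{ε,p}^{θ₁,θ₂}(u)`. -/
def Eeps {n₁ n₂ : ℕ} (ρ : Euc n₁ × Euc n₂ → ℝ) (Ω₁ : Set (Euc n₁)) (Ω₂ : Set (Euc n₂))
    (θ₁ θ₂ p ε : ℝ) (u : Euc n₁ × Euc n₂ → ℝ) : ℝ≥0∞ :=
  ∫⁻ z : Euc n₁ × Euc n₂,
    ENNReal.ofReal ((ε ^ (n₁ + n₂))⁻¹ * ρ (ε⁻¹ • z)) *
      (∫⁻ x in (tube Ω₁ ε) ×ˢ (tube Ω₂ ε),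
        ENNReal.ofReal
          (|u (x.1 + z.1, x.2) - u x| ^ θ₁ * |u (x.1, x.2 + z.2) - u x| ^ θ₂
            / prodNorm z ^ p))

/-- The energy `E_p^{θ₁,θ₂}(u) = liminf_{ε→0⁺} E_{ε,p}(u)`. -/
def Energy {n₁ n₂ : ℕ} (ρ : Euc n₁ × Euc n₂ → ℝ) (Ω₁ : Set (Euc n₁)) (Ω₂ : Set (Euc n₂))
    (θ₁ θ₂ p : ℝ) (u : Euc n₁ × Euc n₂ → ℝ) : ℝ≥0∞ :=
  Filter.liminf (fun ε => Eeps ρ Ω₁ Ω₂ θ₁ θ₂ p ε u) (𝓝[>] (0 : ℝ))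

/-- `u ∈ S(Ω)` : `u` depends a.e. only on `x₁` or only on `x₂`. -/
def memS {n₁ n₂ : ℕ} (Ω₁ : Set (Euc n₁)) (Ω₂ : Set (Euc n₂))
    (u : Euc n₁ × Euc n₂ → ℝ) : Prop :=
  (∃ u₁ : Euc n₁ → ℝ, Measurable u₁ ∧
      ∀ᵐ x ∂(volume.restrict (Ω₁ ×ˢ Ω₂)), u x = u₁ x.1) ∨
  (∃ u₂ : Euc n₂ → ℝ, Measurable u₂ ∧
      ∀ᵐ x ∂(volume.restrict (Ω₁ ×ˢ Ω₂)), u x = u₂ x.2)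

/-- The critical exponent `P(θ₁,θ₂)`. -/
def Pexp (θ₁ θ₂ : ℝ) : ℝ :=
  if θ₁ + θ₂ ≤ 1 then 2
  else if min θ₁ θ₂ ≤ 1 then 1 + (θ₁ + θ₂)
  else min θ₁ θ₂ + (θ₁ + θ₂)

/-- The cross second derivative `∂_{x₁,i} ∂_{x₂,j} φ (x)`. -/
def crossD {n₁ n₂ : ℕ} (φ : Euc n₁ × Euc n₂ → ℝ) (i : Fin n₁) (j : Fin n₂)
    (x : Euc n₁ × Euc n₂) : ℝ :=
  fderiv ℝ (fun y => fderiv ℝ φ y ((0 : Euc n₁), (EuclideanSpace.single j 1 : Euc n₂))) x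
    ((EuclideanSpace.single i 1 : Euc n₁), (0 : Euc n₂))

/-- The quantity `q(x,z)` from the paper. -/
def qfun {n₁ n₂ : ℕ} (θ₁ θ₂ : ℝ) (u : Euc n₁ × Euc n₂ → ℝ)
    (z x : Euc n₁ × Euc n₂) : ℝ :=
  (|u (x.1 + z.1, x.2 + z.2) - u (x.1, x.2 + z.2)| ^ θ₁
      + |u (x.1 + z.1, x.2) - u x| ^ θ₁) *
  (|u (x.1 + z.1, x.2 + z.2) - u (x.1 + z.1, x.2)| ^ θ₂
      + |u (x.1, x.2 + z.2) - u x| ^ θ₂)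


/-! ### Auxiliary lemmas -/

open Pointwise in
lemma aux_steinhaus_ball {m : ℕ} (T : Set (Euc m)) (hTmeas : MeasurableSet T)
    (hTpos : 0 < volume T) : ∃ η > 0, Metric.ball (0 : Euc m) η ⊆ T - T := by
  have hst := MeasureTheory.Measure.sub_mem_nhds_zero_of_addHaar_pos volume T hTmeas hTpos
  obtain ⟨η, hη, hball⟩ := Metric.mem_nhds_iff.1 hst
  exact ⟨η, hη, hball⟩

lemma aux_sep_set_null {m : ℕ} {ε : ℝ} (hε : 0 < ε) (v : Euc m) (hv : ‖v‖ = ε)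
    (S : Set (Euc m)) (hS : ∀ x ∈ S, ∀ y ∈ S, ε ≤ ‖x + v - y‖) : volume S = 0 := by
  by_contra h
  have hcover : S = ⋃ n : ℕ, S ∩ Metric.ball 0 n := by
    ext x
    simp only [mem_iUnion, mem_inter_iff, Metric.mem_ball]
    constructor
    · intro hx
      obtain ⟨n, hn⟩ := exists_nat_gt (dist x 0)
      exact ⟨n, hx, hn⟩
    · rintro ⟨n, hx, -⟩; exact hx
  have hex : ∃ n : ℕ, volume (S ∩ Metric.ball 0 n) ≠ 0 := by
    by_contra hall
    push_neg at hall
    exact h (by rw [hcover]; exact measure_iUnion_null hall)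
  obtain ⟨n, hn⟩ := hex
  set T := closure (S ∩ Metric.ball 0 n) with hT
  have hTmeas : MeasurableSet T := isClosed_closure.measurableSet
  have hTpos : 0 < volume T :=
    lt_of_lt_of_le (pos_iff_ne_zero.mpr hn) (measure_mono subset_closure)
  have hTprop : ∀ x ∈ T, ∀ y ∈ T, ε ≤ ‖x + v - y‖ := by
    have hcl : T ×ˢ T ⊆ {p : Euc m × Euc m | ε ≤ ‖p.1 + v - p.2‖} := by
      rw [hT, ← closure_prod_eq]
      apply closure_minimal
      · rintro ⟨x, y⟩ ⟨⟨hx, -⟩, hy, -⟩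
        exact hS x hx y hy
      · exact isClosed_le continuous_const
          (((continuous_fst.add continuous_const).sub continuous_snd).norm)
    intro x hx y hy
    simpa only [mem_setOf_eq] using hcl (mk_mem_prod hx hy)
  obtain ⟨η, hη, hball⟩ := aux_steinhaus_ball T hTmeas hTpos
  set t := min (ε / 2) (η / 2) with htdef
  have ht0 : 0 < t := lt_min (by linarith) (by linarith)
  have htε : t < ε := lt_of_le_of_lt (min_le_left _ _) (by linarith)
  have htη : t < η := lt_of_le_of_lt (min_le_right _ _) (by linarith)
  have hw : (-(t / ε)) • v ∈ Metric.ball (0 : Euc m) η := by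
    rw [Metric.mem_ball, dist_zero_right, norm_smul, hv]
    rw [Real.norm_eq_abs, abs_neg, abs_of_nonneg (by positivity)]
    rw [div_mul_cancel₀ _ hε.ne']
    exact htη
  obtain ⟨x, hx, y, hy, hxy⟩ := hball hw
  have hkey := hTprop x hx y hy
  have hcomp : x + v - y = (1 - t / ε) • v := by
    have h1 : x - y = (-(t / ε)) • v := hxy
    have h2 : x + v - y = (x - y) + v := by abel
    rw [h2, h1, sub_smul, one_smul, neg_smul]
    abel
  rw [hcomp, norm_smul, hv, Real.norm_eq_abs,
    abs_of_nonneg (by rw [sub_nonneg]; exact (div_le_one hε).mpr htε.le)] at hkey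
  have heq : (1 - t / ε) * ε = ε - t := by field_simp
  rw [heq] at hkey
  linarith

lemma aux_tube_subset {m : ℕ} (Ω : Set (Euc m)) {ε : ℝ} (hε : 0 < ε) : tube Ω ε ⊆ Ω := by
  intro x hx
  simpa using hx 0 (by simpa using hε)

lemma aux_tube_isClosed {m : ℕ} (Ω : Set (Euc m)) (ε : ℝ) : IsClosed (tube Ω ε) := by
  rw [← isOpen_compl_iff]
  have hco : (tube Ω ε)ᶜ = ⋃ y ∈ Ωᶜ, Metric.ball y ε := by
    ext x
    simp only [mem_compl_iff, tube, mem_setOf_eq, not_forall, mem_iUnion, Metric.mem_ball]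
    constructor
    · rintro ⟨z, hz, hnz⟩
      exact ⟨x + z, hnz, by simpa [dist_eq_norm] using hz⟩
    · rintro ⟨y, hy, hxy⟩
      refine ⟨y - x, by simpa [dist_eq_norm, norm_sub_rev] using hxy, by simpa using hy⟩
  rw [hco]
  exact isOpen_biUnion fun y _ => Metric.isOpen_ball

lemma aux_badset_null {m : ℕ} (Ω : Set (Euc m)) {ε : ℝ} (hε : 0 < ε) (v : Euc m)
    (hv : ‖v‖ ≤ ε) : volume {x | x ∈ tube Ω ε ∧ x + v ∉ Ω} = 0 := by
  rcases lt_or_eq_of_le hv with h | h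
  · have hem : {x | x ∈ tube Ω ε ∧ x + v ∉ Ω} = ∅ := by
      ext x
      simp only [mem_setOf_eq, mem_empty_iff_false, iff_false, not_and, not_not]
      exact fun hx => hx v h
    simp [hem]
  · refine aux_sep_set_null hε v h _ ?_
    rintro x ⟨-, hxv⟩ y ⟨hy, -⟩
    by_contra hlt
    push_neg at hlt
    have hmem := hy (x + v - y) hlt
    rw [add_sub_cancel] at hmem
    exact hxv hmem

lemma aux_subadd_rpow {θ : ℝ} (hθ0 : 0 ≤ θ) (hθ1 : θ ≤ 1) {p q : ℝ} (hp : 0 ≤ p) (hq : 0 ≤ q) :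
    (p + q) ^ θ ≤ p ^ θ + q ^ θ := by
  lift p to NNReal using hp
  lift q to NNReal using hq
  have h : ((p + q) ^ θ : NNReal) ≤ p ^ θ + q ^ θ := NNReal.rpow_add_le_add_rpow p q hθ0 hθ1
  exact_mod_cast h

lemma aux_key_ineq {θ₁ θ₂ : ℝ} (h₁ : 0 < θ₁) (h₂ : 0 < θ₂) (hθ : θ₁ + θ₂ ≤ 1)
    {a b c d : ℝ} (h : θ₁ + θ₂ = 1 ∨ (|a| ≤ 1 ∧ |b| ≤ 1 ∧ |c| ≤ 1 ∧ |d| ≤ 1)) :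
    |a - b - c + d| ≤ 4 * ((|a - c| ^ θ₁ + |b - d| ^ θ₁) * (|a - b| ^ θ₂ + |c - d| ^ θ₂)) := by
  set s := |a - b - c + d| with hs
  have hs0 : 0 ≤ s := abs_nonneg _
  rcases eq_or_lt_of_le hs0 with h0 | hpos
  · rw [← h0]; positivity
  have hP : s ≤ |a - c| + |b - d| := by
    calc s = |(a - c) - (b - d)| := by rw [hs]; ring_nf
    _ ≤ |a - c| + |b - d| := abs_sub _ _
  have hQ : s ≤ |a - b| + |c - d| := by
    calc s = |(a - b) - (c - d)| := by rw [hs]; ring_nf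
    _ ≤ |a - b| + |c - d| := abs_sub _ _
  have e1 : s ^ θ₁ ≤ |a - c| ^ θ₁ + |b - d| ^ θ₁ :=
    (Real.rpow_le_rpow hs0 hP h₁.le).trans
      (aux_subadd_rpow h₁.le (by linarith) (abs_nonneg _) (abs_nonneg _))
  have e2 : s ^ θ₂ ≤ |a - b| ^ θ₂ + |c - d| ^ θ₂ :=
    (Real.rpow_le_rpow hs0 hQ h₂.le).trans
      (aux_subadd_rpow h₂.le (by linarith) (abs_nonneg _) (abs_nonneg _))
  have hs4 : s ^ (1 - (θ₁ + θ₂)) ≤ 4 := by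
    rcases h with h | h
    · rw [h]; norm_num
    · have hs4' : s ≤ 4 := by
        have t1 : |a - b - c + d| ≤ |a - b - c| + |d| := abs_add_le _ _
        have t2 : |a - b - c| ≤ |a - b| + |c| := abs_sub _ _
        have t3 : |a - b| ≤ |a| + |b| := abs_sub _ _
        obtain ⟨ha, hb, hc, hd⟩ := h
        rw [hs]
        linarith
      calc s ^ (1 - (θ₁ + θ₂)) ≤ 4 ^ (1 - (θ₁ + θ₂)) :=
            Real.rpow_le_rpow hs0 hs4' (by linarith)
      _ ≤ 4 ^ (1 : ℝ) := Real.rpow_le_rpow_of_exponent_le (by norm_num) (by linarith)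
      _ = 4 := Real.rpow_one 4
  have hsplit : s = s ^ (1 - (θ₁ + θ₂)) * (s ^ θ₁ * s ^ θ₂) := by
    rw [← Real.rpow_add hpos, ← Real.rpow_add hpos,
      show 1 - (θ₁ + θ₂) + (θ₁ + θ₂) = 1 by ring, Real.rpow_one]
  calc s = s ^ (1 - (θ₁ + θ₂)) * (s ^ θ₁ * s ^ θ₂) := hsplit
  _ ≤ 4 * ((|a - c| ^ θ₁ + |b - d| ^ θ₁) * (|a - b| ^ θ₂ + |c - d| ^ θ₂)) := by
      apply mul_le_mul hs4
      · exact mul_le_mul e1 e2 (Real.rpow_nonneg hs0 _)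
          (add_nonneg (Real.rpow_nonneg (abs_nonneg _) _) (Real.rpow_nonneg (abs_nonneg _) _))
      · exact mul_nonneg (Real.rpow_nonneg hs0 _) (Real.rpow_nonneg hs0 _)
      · norm_num

lemma aux_mp_add {m k : ℕ} (w₁ : Euc m) (w₂ : Euc k) :
    MeasurePreserving (fun x : Euc m × Euc k => (x.1 + w₁, x.2 + w₂)) volume volume := by
  rw [Measure.volume_eq_prod]
  exact (measurePreserving_add_right volume w₁).prod (measurePreserving_add_right volume w₂)

lemma aux_null_translate {m k : ℕ} (w₁ : Euc m) (w₂ : Euc k) {s : Set (Euc m × Euc k)}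
    (h : volume s = 0) : volume {x : Euc m × Euc k | (x.1 + w₁, x.2 + w₂) ∈ s} = 0 := by
  obtain ⟨B, hsB, hBmeas, hB⟩ := exists_measurable_superset_of_null h
  have hsub : {x : Euc m × Euc k | (x.1 + w₁, x.2 + w₂) ∈ s} ⊆
      (fun x : Euc m × Euc k => (x.1 + w₁, x.2 + w₂)) ⁻¹' B := fun x hx => hsB hx
  refine measure_mono_null hsub ?_
  rw [(aux_mp_add w₁ w₂).measure_preimage hBmeas.nullMeasurableSet, hB]

lemma aux_null_fst {m k : ℕ} {s : Set (Euc m)} (h : volume s = 0) :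
    volume ((Prod.fst ⁻¹' s : Set (Euc m × Euc k))) = 0 := by
  rw [← Set.prod_univ, MeasureTheory.Measure.volume_eq_prod, Measure.prod_prod, h, zero_mul]

lemma aux_null_snd {m k : ℕ} {s : Set (Euc k)} (h : volume s = 0) :
    volume ((Prod.snd ⁻¹' s : Set (Euc m × Euc k))) = 0 := by
  rw [← Set.univ_prod, MeasureTheory.Measure.volume_eq_prod, Measure.prod_prod, h, mul_zero]

lemma aux_liminf_const_mul (g : ℕ → ℝ≥0∞) {c : ℝ≥0∞} (hc : c ≠ ⊤) :
    Filter.liminf (fun k => c * g k) atTop = c * Filter.liminf g atTop := by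
  have hmono : Monotone (fun x : ℝ≥0∞ => c * x) := fun _ _ h => mul_le_mul_right h c
  have hmap := hmono.map_liminf_of_continuousAt (F := atTop) g
    ((ENNReal.continuous_const_mul hc).continuousAt)
  rw [Function.comp_def] at hmap
  exact hmap.symm

/-- for `θ = θ₁+θ₂ ≤ 1` (with `θ = 1`, or `θ < 1` and `‖u‖_∞ ≤ 1`), the
liminf of the integrated second difference quotients is controlled, up to a constant
depending only on `θ₁, θ₂`, by `F_{ij}(u)`. -/
theorem statement15 (θ₁ θ₂ : ℝ) (hθ₁ : 0 < θ₁) (hθ₂ : 0 < θ₂) (hθ : θ₁ + θ₂ ≤ 1) :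
    ∃ C : ℝ, 0 < C ∧
      ∀ (n₁ n₂ : ℕ), 1 ≤ n₁ → 1 ≤ n₂ →
      ∀ (Ω₁ : Set (Euc n₁)) (Ω₂ : Set (Euc n₂)), GoodDomain Ω₁ → GoodDomain Ω₂ →
      ∀ u : Euc n₁ × Euc n₂ → ℝ, LocallyIntegrableOn u (Ω₁ ×ˢ Ω₂) volume →
        (θ₁ + θ₂ = 1 ∨ (θ₁ + θ₂ < 1 ∧
          ∀ᵐ x ∂(volume.restrict (Ω₁ ×ˢ Ω₂)), |u x| ≤ 1)) →
      ∀ r ε : ℕ → ℝ, (∀ k, 0 < r k ∧ r k ≤ ε k) → Tendsto ε atTop (𝓝 (0 : ℝ)) →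
      ∀ (i : Fin n₁) (j : Fin n₂),
        Filter.liminf (fun k : ℕ =>
            ∫⁻ x in (tube Ω₁ (ε k)) ×ˢ (tube Ω₂ (ε k)),
              ENNReal.ofReal
                (|u (x.1 + r k • (EuclideanSpace.single i 1 : Euc n₁),
                      x.2 + r k • (EuclideanSpace.single j 1 : Euc n₂))
                    - u (x.1 + r k • (EuclideanSpace.single i 1 : Euc n₁), x.2)
                    - u (x.1, x.2 + r k • (EuclideanSpace.single j 1 : Euc n₂))
                    + u x| / r k ^ 2)) atTop
          ≤ ENNReal.ofReal C *
            Filter.liminf (fun k : ℕ =>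
              ∫⁻ x in (tube Ω₁ (ε k)) ×ˢ (tube Ω₂ (ε k)),
                ENNReal.ofReal
                  (qfun θ₁ θ₂ u
                    (r k • (EuclideanSpace.single i 1 : Euc n₁), r k • (EuclideanSpace.single j 1 : Euc n₂)) x
                    / r k ^ 2)) atTop := by
  refine ⟨4, by norm_num, ?_⟩
  intro n₁ n₂ hn₁ hn₂ Ω₁ Ω₂ hΩ₁ hΩ₂ u hu hcase r ε hrε hεtend i j
  have key : ∀ k : ℕ,
      (∫⁻ x in (tube Ω₁ (ε k)) ×ˢ (tube Ω₂ (ε k)),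
        ENNReal.ofReal
          (|u (x.1 + r k • (EuclideanSpace.single i 1 : Euc n₁),
                x.2 + r k • (EuclideanSpace.single j 1 : Euc n₂))
              - u (x.1 + r k • (EuclideanSpace.single i 1 : Euc n₁), x.2)
              - u (x.1, x.2 + r k • (EuclideanSpace.single j 1 : Euc n₂))
              + u x| / r k ^ 2))
      ≤ ENNReal.ofReal 4 *
        (∫⁻ x in (tube Ω₁ (ε k)) ×ˢ (tube Ω₂ (ε k)),
          ENNReal.ofReal
            (qfun θ₁ θ₂ u
              (r k • (EuclideanSpace.single i 1 : Euc n₁),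
               r k • (EuclideanSpace.single j 1 : Euc n₂)) x / r k ^ 2)) := by
    intro k
    obtain ⟨hrk, hrek⟩ := hrε k
    have hek : 0 < ε k := lt_of_lt_of_le hrk hrek
    set v₁ : Euc n₁ := r k • (EuclideanSpace.single i 1 : Euc n₁) with hv₁def
    set v₂ : Euc n₂ := r k • (EuclideanSpace.single j 1 : Euc n₂) with hv₂def
    have hv₁ : ‖v₁‖ ≤ ε k := by
      rw [hv₁def, norm_smul, EuclideanSpace.norm_single, norm_one, mul_one,
        Real.norm_eq_abs, abs_of_pos hrk]
      exact hrek
    have hv₂ : ‖v₂‖ ≤ ε k := by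
      rw [hv₂def, norm_smul, EuclideanSpace.norm_single, norm_one, mul_one,
        Real.norm_eq_abs, abs_of_pos hrk]
      exact hrek
    have hr2 : (0 : ℝ) < r k ^ 2 := by positivity
    have hTmeas : MeasurableSet ((tube Ω₁ (ε k)) ×ˢ (tube Ω₂ (ε k))) :=
      ((aux_tube_isClosed Ω₁ (ε k)).measurableSet).prod
        ((aux_tube_isClosed Ω₂ (ε k)).measurableSet)
    -- pointwise a.e. estimate
    have hpt : ∀ᵐ x ∂(volume.restrict ((tube Ω₁ (ε k)) ×ˢ (tube Ω₂ (ε k)))),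
        |u (x.1 + v₁, x.2 + v₂) - u (x.1 + v₁, x.2) - u (x.1, x.2 + v₂) + u x|
          ≤ 4 * qfun θ₁ θ₂ u (v₁, v₂) x := by
      rcases hcase with hθ1 | ⟨hθlt, hbound⟩
      · refine Filter.Eventually.of_forall fun x => ?_
        simpa [qfun] using aux_key_ineq hθ₁ hθ₂ hθ
          (a := u (x.1 + v₁, x.2 + v₂)) (b := u (x.1 + v₁, x.2))
          (c := u (x.1, x.2 + v₂)) (d := u x) (Or.inl hθ1)
      · -- the exceptional null set
        set N : Set (Euc n₁ × Euc n₂) := {x | x ∈ Ω₁ ×ˢ Ω₂ ∧ ¬ |u x| ≤ 1} with hNdef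
        have hsmeas : MeasurableSet (Ω₁ ×ˢ Ω₂ : Set (Euc n₁ × Euc n₂)) :=
          (hΩ₁.isOpen.measurableSet).prod (hΩ₂.isOpen.measurableSet)
        have hN : volume N = 0 := by
          have h1 := (ae_restrict_iff' hsmeas).1 hbound
          rw [Filter.eventually_iff, MeasureTheory.mem_ae_iff] at h1
          refine measure_mono_null ?_ h1
          intro x hx
          simp only [mem_compl_iff, mem_setOf_eq]
          intro himp
          exact hx.2 (himp hx.1)
        have hB₁ : volume {y | y ∈ tube Ω₁ (ε k) ∧ y + v₁ ∉ Ω₁} = 0 :=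
          aux_badset_null Ω₁ hek v₁ hv₁
        have hB₂ : volume {y | y ∈ tube Ω₂ (ε k) ∧ y + v₂ ∉ Ω₂} = 0 :=
          aux_badset_null Ω₂ hek v₂ hv₂
        have hG1 : volume (Prod.fst ⁻¹' {y | y ∈ tube Ω₁ (ε k) ∧ y + v₁ ∉ Ω₁} :
            Set (Euc n₁ × Euc n₂)) = 0 := aux_null_fst hB₁
        have hG2 : volume (Prod.snd ⁻¹' {y | y ∈ tube Ω₂ (ε k) ∧ y + v₂ ∉ Ω₂} :
            Set (Euc n₁ × Euc n₂)) = 0 := aux_null_snd hB₂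
        have hG3 : volume {x : Euc n₁ × Euc n₂ | (x.1 + v₁, x.2 + 0) ∈ N} = 0 :=
          aux_null_translate v₁ 0 hN
        have hG4 : volume {x : Euc n₁ × Euc n₂ | (x.1 + 0, x.2 + v₂) ∈ N} = 0 :=
          aux_null_translate 0 v₂ hN
        have hG5 : volume {x : Euc n₁ × Euc n₂ | (x.1 + v₁, x.2 + v₂) ∈ N} = 0 :=
          aux_null_translate v₁ v₂ hN
        have hae1 : ∀ᵐ x ∂(volume : Measure (Euc n₁ × Euc n₂)),
            x ∉ (Prod.fst ⁻¹' {y | y ∈ tube Ω₁ (ε k) ∧ y + v₁ ∉ Ω₁}) ∧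
            x ∉ (Prod.snd ⁻¹' {y | y ∈ tube Ω₂ (ε k) ∧ y + v₂ ∉ Ω₂}) ∧
            x ∉ N ∧
            x ∉ {x : Euc n₁ × Euc n₂ | (x.1 + v₁, x.2 + 0) ∈ N} ∧
            x ∉ {x : Euc n₁ × Euc n₂ | (x.1 + 0, x.2 + v₂) ∈ N} ∧
            x ∉ {x : Euc n₁ × Euc n₂ | (x.1 + v₁, x.2 + v₂) ∈ N} := by
          refine ((measure_eq_zero_iff_ae_notMem.1 hG1).and ((measure_eq_zero_iff_ae_notMem.1 hG2).and
            ((measure_eq_zero_iff_ae_notMem.1 hN).and ((measure_eq_zero_iff_ae_notMem.1 hG3).and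
            ((measure_eq_zero_iff_ae_notMem.1 hG4).and (measure_eq_zero_iff_ae_notMem.1 hG5))))))
        filter_upwards [ae_restrict_of_ae hae1, ae_restrict_mem hTmeas] with x hx hxT
        obtain ⟨hg1, hg2, hg3, hg4, hg5, hg6⟩ := hx
        have hx1 : x.1 ∈ tube Ω₁ (ε k) := hxT.1
        have hx2 : x.2 ∈ tube Ω₂ (ε k) := hxT.2
        have hx1Ω : x.1 ∈ Ω₁ := aux_tube_subset Ω₁ hek hx1
        have hx2Ω : x.2 ∈ Ω₂ := aux_tube_subset Ω₂ hek hx2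
        have hx1v : x.1 + v₁ ∈ Ω₁ := by
          by_contra hcon
          exact hg1 ⟨hx1, hcon⟩
        have hx2v : x.2 + v₂ ∈ Ω₂ := by
          by_contra hcon
          exact hg2 ⟨hx2, hcon⟩
        have hd : |u x| ≤ 1 := by
          by_contra hcon
          exact hg3 ⟨⟨hx1Ω, hx2Ω⟩, hcon⟩
        have hb : |u (x.1 + v₁, x.2)| ≤ 1 := by
          by_contra hcon
          refine hg4 ?_
          simp only [hNdef, mem_setOf_eq, add_zero]
          exact ⟨⟨hx1v, hx2Ω⟩, hcon⟩
        have hc : |u (x.1, x.2 + v₂)| ≤ 1 := by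
          by_contra hcon
          refine hg5 ?_
          simp only [hNdef, mem_setOf_eq, zero_add, add_zero]
          exact ⟨⟨by simpa using hx1Ω, hx2v⟩, by simpa using hcon⟩
        have ha : |u (x.1 + v₁, x.2 + v₂)| ≤ 1 := by
          by_contra hcon
          exact hg6 ⟨⟨hx1v, hx2v⟩, hcon⟩
        simpa [qfun] using aux_key_ineq hθ₁ hθ₂ hθ
          (a := u (x.1 + v₁, x.2 + v₂)) (b := u (x.1 + v₁, x.2))
          (c := u (x.1, x.2 + v₂)) (d := u x) (Or.inr ⟨ha, hb, hc, hd⟩)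
    have hae : ∀ᵐ x ∂(volume.restrict ((tube Ω₁ (ε k)) ×ˢ (tube Ω₂ (ε k)))),
        ENNReal.ofReal
          (|u (x.1 + v₁, x.2 + v₂) - u (x.1 + v₁, x.2) - u (x.1, x.2 + v₂) + u x| / r k ^ 2)
        ≤ ENNReal.ofReal 4 * ENNReal.ofReal (qfun θ₁ θ₂ u (v₁, v₂) x / r k ^ 2) := by
      filter_upwards [hpt] with x hx
      rw [← ENNReal.ofReal_mul (by norm_num : (0:ℝ) ≤ 4)]
      apply ENNReal.ofReal_le_ofReal
      rw [← mul_div_assoc]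
      gcongr
    calc (∫⁻ x in (tube Ω₁ (ε k)) ×ˢ (tube Ω₂ (ε k)),
        ENNReal.ofReal
          (|u (x.1 + v₁, x.2 + v₂) - u (x.1 + v₁, x.2) - u (x.1, x.2 + v₂) + u x| / r k ^ 2))
        ≤ ∫⁻ x in (tube Ω₁ (ε k)) ×ˢ (tube Ω₂ (ε k)),
          ENNReal.ofReal 4 * ENNReal.ofReal (qfun θ₁ θ₂ u (v₁, v₂) x / r k ^ 2) :=
        lintegral_mono_ae hae
    _ = ENNReal.ofReal 4 * ∫⁻ x in (tube Ω₁ (ε k)) ×ˢ (tube Ω₂ (ε k)),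
          ENNReal.ofReal (qfun θ₁ θ₂ u (v₁, v₂) x / r k ^ 2) :=
        lintegral_const_mul' _ _ ENNReal.ofReal_ne_top
  calc Filter.liminf (fun k : ℕ =>
      ∫⁻ x in (tube Ω₁ (ε k)) ×ˢ (tube Ω₂ (ε k)),
        ENNReal.ofReal
          (|u (x.1 + r k • (EuclideanSpace.single i 1 : Euc n₁),
                x.2 + r k • (EuclideanSpace.single j 1 : Euc n₂))
              - u (x.1 + r k • (EuclideanSpace.single i 1 : Euc n₁), x.2)
              - u (x.1, x.2 + r k • (EuclideanSpace.single j 1 : Euc n₂))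
              + u x| / r k ^ 2)) atTop
      ≤ Filter.liminf (fun k : ℕ => ENNReal.ofReal 4 *
        (∫⁻ x in (tube Ω₁ (ε k)) ×ˢ (tube Ω₂ (ε k)),
          ENNReal.ofReal
            (qfun θ₁ θ₂ u
              (r k • (EuclideanSpace.single i 1 : Euc n₁),
               r k • (EuclideanSpace.single j 1 : Euc n₂)) x / r k ^ 2))) atTop :=
      Filter.liminf_le_liminf (Filter.Eventually.of_forall key)
  _ = ENNReal.ofReal 4 * Filter.liminf (fun k : ℕ =>
        ∫⁻ x in (tube Ω₁ (ε k)) ×ˢ (tube Ω₂ (ε k)),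
          ENNReal.ofReal
            (qfun θ₁ θ₂ u
              (r k • (EuclideanSpace.single i 1 : Euc n₁),
               r k • (EuclideanSpace.single j 1 : Euc n₂)) x / r k ^ 2)) atTop :=
      aux_liminf_const_mul _ ENNReal.ofReal_ne_top
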